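/- arXiv:2601.22017 — 2 statements merged into one kernel-verified Lean document; each statement's English description precedes it below -/
import Mathlib

section
/- Let C be an abelian monoidal category in which every object has a left dual and whose tensor unit is a simple object, let D be an abelian monoidal category whose tensor product is additive in each variable and whose tensor unit is not a zero object, and let F : C → D be a strong monoidal functor that preserves finite limits and finite colimits. Then F is faithful. -/
/-!
Statement 1: Let `C` be an abelian monoidal category in which every object has a left dual
(in the convention `ev : X* ⊗ X ⟶ 𝟙`, `coev : 𝟙 ⟶ X ⊗ X*`, which is Mathlib's
`RightRigidCategory`) and whose tensor unit is simple; let `D` be an abelian monoidal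
category whose tensor product is additive in each variable (`MonoidalPreadditive`) and whose
tensor unit is not a zero object, and let `F : C ⥤ D` be a strong monoidal functor preserving
finite limits and finite colimits.  Then `F` is faithful.
-/

open CategoryTheory CategoryTheory.Limits MonoidalCategory

/-- If `F` is exact and the hypotheses of the statement hold, then `F` reflects zero objects. -/
lemma aux_reflect_zero {C : Type*} {D : Type*} [Category C] [Category D]
    [MonoidalCategory C] [MonoidalCategory D] [Abelian C] [Abelian D]
    [RightRigidCategory C] [Simple (𝟙_ C)]
    [MonoidalPreadditive D] (hD : ¬ IsZero (𝟙_ D))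
    (F : C ⥤ D) [F.Monoidal]
    [PreservesFiniteLimits F] [PreservesFiniteColimits F]
    (X : C) (hX : IsZero (F.obj X)) : IsZero X := by
  by_contra h
  have hη : (η_ X Xᘁ) ≠ 0 := by
    intro h0
    apply h
    rw [IsZero.iff_id_eq_zero]
    have tri := ExactPairing.evaluation_coevaluation (X := X) (Y := Xᘁ)
    have : (tensorRight X).IsLeftAdjoint := (tensorRightAdjunction X Xᘁ).isLeftAdjoint
    have hw : (η_ X Xᘁ) ▷ X = 0 := by
      have e : (η_ X Xᘁ) ▷ X = (tensorRight X).map (η_ X Xᘁ) := rfl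
      rw [e, h0, Functor.map_zero]
    rw [hw, zero_comp] at tri
    calc 𝟙 X = (λ_ X).inv ≫ ((λ_ X).hom ≫ (ρ_ X).inv) ≫ (ρ_ X).hom := by simp
    _ = 0 := by rw [← tri]; simp
  have : Mono (η_ X Xᘁ) := mono_of_nonzero_from_simple hη
  have hmono : Mono (F.map (η_ X Xᘁ)) := inferInstance
  have hz2 : IsZero (F.obj (X ⊗ Xᘁ)) := by
    have h1 : IsZero (F.obj X ⊗ F.obj Xᘁ) := (tensorRight (F.obj Xᘁ)).map_isZero hX
    exact h1.of_iso (Functor.Monoidal.μIso F X Xᘁ).symm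
  have hz1 : IsZero (F.obj (𝟙_ C)) := IsZero.of_mono (F.map (η_ X Xᘁ)) hz2
  exact hD (hz1.of_iso (Functor.Monoidal.εIso F))

theorem stmt1 {C : Type*} {D : Type*} [Category C] [Category D]
    [MonoidalCategory C] [MonoidalCategory D] [Abelian C] [Abelian D]
    [RightRigidCategory C] [Simple (𝟙_ C)]
    [MonoidalPreadditive D] (hD : ¬ IsZero (𝟙_ D))
    (F : C ⥤ D) [F.Monoidal]
    [PreservesFiniteLimits F] [PreservesFiniteColimits F] :
    F.Faithful := by
  have : F.Additive := F.additive_of_preserves_binary_products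
  have key : ∀ {X Y : C} (f : X ⟶ Y), F.map f = 0 → f = 0 := by
    intro X Y f hf
    have h1 : F.map (factorThruImage f) ≫ F.map (image.ι f) = 0 := by
      rw [← F.map_comp, image.fac, hf]
    have h2 : F.map (image.ι f) = 0 := zero_of_epi_comp _ h1
    have h3 : IsZero (image f) :=
      aux_reflect_zero hD F _ (IsZero.of_mono_eq_zero (F.map (image.ι f)) h2)
    rw [← image.fac f, h3.eq_of_src (image.ι f) 0, comp_zero]
  exact ⟨fun {X Y f g} hfg => by
    rw [← sub_eq_zero]
    exact key (f - g) (by rw [F.map_sub, hfg, sub_self])⟩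
end

section
/- Let k be a field, H a bialgebra over k with comultiplication Δ (Sweedler notation Δ(h) = Σ h₍₁₎ ⊗ h₍₂₎) and counit ε, and let J = Σ J⁽¹⁾ ⊗ J⁽²⁾ and L be invertible elements of H ⊗ H, each satisfying the 2-cocycle identity ((id ⊗ Δ)(W)) · (1 ⊗ W) = ((Δ ⊗ id)(W)) · (W ⊗ 1) (for W = J and W = L) and normalized, i.e., (ε ⊗ id)(W) = 1 = (id ⊗ ε)(W). Write L⁻¹ = Σ L⁽⁻¹⁾ ⊗ L⁽⁻²⁾. Then the bilinear product on the dual space H* = Hom_k(H, k) defined by (f · g)(h) = Σ g(L⁽⁻¹⁾ h₍₁₎ J⁽¹⁾) f(L⁽⁻²⁾ h₍₂₎ J⁽²⁾) is associative and has ε as a two-sided unit, so it makes H* an associative unital k-algebra. -/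
/-!
The twisted map `h ↦ L⁻¹ Δ(h) J` is again a coassociative comultiplication on `H` with counit
`ε`. Coassociativity: `Δ ⊗ id` and `id ⊗ Δ` are algebra maps, so the twists appear as
`(L⁻¹ ⊗ 1)(Δ ⊗ id)(L⁻¹)` and `(Δ ⊗ id)(J)(J ⊗ 1)`, which the cocycle identities (for `L` in
inverted form) turn into their `id ⊗ Δ` counterparts. Counitality: `ε ⊗ id` and `id ⊗ ε` are
algebra maps sending `J` and `L` to `1`. The product on `H*` is the convolution product of this
coalgebra with its factors swapped, hence associative with unit `ε`.
-/

open TensorProduct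

universe u v

variable (k : Type u) (H : Type v) [Field k] [Ring H] [Bialgebra k H]

/-- The Hopf 2-cocycle identity
`((id ⊗ Δ)(W)) · (1 ⊗ W) = ((Δ ⊗ id)(W)) · (W ⊗ 1)` in `H ⊗ H ⊗ H`. -/
def IsTwoCocycle (W : H ⊗[k] H) : Prop :=
  (LinearMap.lTensor H (Coalgebra.comul (R := k) (A := H))) W * ((1 : H) ⊗ₜ[k] W) =
    (TensorProduct.assoc k H H H)
        ((LinearMap.rTensor H (Coalgebra.comul (R := k) (A := H))) W) *
      (TensorProduct.assoc k H H H) (W ⊗ₜ[k] (1 : H))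

/-- Normalization of an element `W` of `H ⊗ H`: `(ε ⊗ id)(W) = 1 = (id ⊗ ε)(W)`. -/
def IsNormalized (W : H ⊗[k] H) : Prop :=
  (TensorProduct.lid k H) ((LinearMap.rTensor H (Coalgebra.counit (R := k) (A := H))) W) = 1 ∧
  (TensorProduct.rid k H) ((LinearMap.lTensor H (Coalgebra.counit (R := k) (A := H))) W) = 1

/-- The twisted comultiplication `ᴸΔᴶ : H →ₗ[k] H ⊗ H`, `h ↦ L⁻¹ · Δ(h) · J`; in Sweedler
notation `ᴸΔᴶ(h) = Σ L⁽⁻¹⁾ h₍₁₎ J⁽¹⁾ ⊗ L⁽⁻²⁾ h₍₂₎ J⁽²⁾`. -/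
noncomputable def twistedComul (J L : H ⊗[k] H) [Invertible L] : H →ₗ[k] H ⊗[k] H :=
  (LinearMap.mulRight k J) ∘ₗ (LinearMap.mulLeft k (⅟L)) ∘ₗ
    (Coalgebra.comul (R := k) (A := H))

/-- The twisted product on the dual space `H* = Hom_k(H, k)`:
`(f · g)(h) = Σ g(L⁽⁻¹⁾ h₍₁₎ J⁽¹⁾) · f(L⁽⁻²⁾ h₍₂₎ J⁽²⁾)`. -/
noncomputable def twistedDualMul (J L : H ⊗[k] H) [Invertible L]
    (f g : Module.Dual k H) : Module.Dual k H :=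
  (TensorProduct.lid k k).toLinearMap ∘ₗ (TensorProduct.map g f) ∘ₗ twistedComul k H J L

section DualOfComul

open LinearMap WithConv

variable {R C : Type*} [CommSemiring R] [AddCommMonoid C] [Module R C]

noncomputable def comulDualMul (δ : C →ₗ[R] C ⊗[R] C) (f g : Module.Dual R C) :
    Module.Dual R C :=
  (TensorProduct.lid R R).toLinearMap ∘ₗ TensorProduct.map g f ∘ₗ δ

theorem comulDualMul_assoc_and_unit (δ : C →ₗ[R] C ⊗[R] C) (ε : C →ₗ[R] R)
    (coassoc : (TensorProduct.assoc R C C C).toLinearMap ∘ₗ δ.rTensor C ∘ₗ δ = δ.lTensor C ∘ₗ δ)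
    (rTensor_counit : ε.rTensor C ∘ₗ δ = TensorProduct.mk R R C 1)
    (lTensor_counit : ε.lTensor C ∘ₗ δ = (TensorProduct.mk R C R).flip 1) :
    (∀ f g h, comulDualMul δ (comulDualMul δ f g) h = comulDualMul δ f (comulDualMul δ g h)) ∧
    ∀ f, comulDualMul δ ε f = f ∧ comulDualMul δ f ε = f := by
  let _ : Coalgebra R C :=
    { comul := δ, counit := ε, coassoc, rTensor_counit_comp_comul := rTensor_counit,
      lTensor_counit_comp_comul := lTensor_counit }
  have mul' : mul' R R = (TensorProduct.lid R R).toLinearMap := by ext; simp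
  -- `comulDualMul δ f g` is the convolution product `g * f` of the coalgebra `(C, δ, ε)`.
  have conv (f g : Module.Dual R C) : comulDualMul δ f g = (toConv g * toConv f).ofConv := by
    rw [LinearMap.convMul_def, ofConv_toConv, mul']; rfl
  have one : toConv ε = 1 := rfl
  refine ⟨fun f g h => ?_, fun f => ⟨?_, ?_⟩⟩
  · simp only [conv, toConv_ofConv, mul_assoc]
  · rw [conv, one, mul_one, ofConv_toConv]
  · rw [conv, one, one_mul, ofConv_toConv]

end DualOfComul

section Twisted

variable {k H}

theorem map_invOf_eq_one {M N F : Type*} [Monoid M] [Monoid N] [FunLike F M N]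
    [MonoidHomClass F M N] (f : F) {x : M} [Invertible x] (hx : f x = 1) : f (⅟x) = 1 := by
  calc f (⅟x) = f (⅟x) * f x := by rw [hx, mul_one]
    _ = 1 := by rw [← map_mul, invOf_mul_self, map_one]

local notation "α" => Algebra.TensorProduct.assoc k k k H H H
local notation "Δ₁₂" => Algebra.TensorProduct.rTensor (R := k) H (Bialgebra.comulAlgHom k H)
local notation "Δ₂₃" => Algebra.TensorProduct.lTensor (S := k) H (Bialgebra.comulAlgHom k H)
local notation "ε₁" => Algebra.TensorProduct.rTensor (R := k) H (Bialgebra.counitAlgHom k H)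
local notation "ε₂" => Algebra.TensorProduct.lTensor (S := k) H (Bialgebra.counitAlgHom k H)

namespace IsTwoCocycle

variable {W : H ⊗[k] H}

theorem assoc_eq (hW : IsTwoCocycle k H W) :
    α (Δ₁₂ W * (W ⊗ₜ[k] (1 : H))) = Δ₂₃ W * ((1 : H) ⊗ₜ[k] W) := by
  rw [map_mul]
  exact hW.symm

theorem assoc_invOf_eq (hW : IsTwoCocycle k H W) [Invertible W] :
    α ((⅟W ⊗ₜ[k] (1 : H)) * Δ₁₂ (⅟W)) = ((1 : H) ⊗ₜ[k] ⅟W) * Δ₂₃ (⅟W) := by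
  -- Both sides are inverses of the two sides of the cocycle identity.
  refine left_inv_eq_right_inv (a := Δ₂₃ W * ((1 : H) ⊗ₜ[k] W)) ?_ ?_
  · rw [← hW.assoc_eq, ← map_mul, mul_assoc, ← mul_assoc (Δ₁₂ _), ← map_mul, invOf_mul_self,
      map_one, one_mul, Algebra.TensorProduct.tmul_mul_tmul, invOf_mul_self, one_mul,
      ← Algebra.TensorProduct.one_def, map_one]
  · rw [mul_assoc, ← mul_assoc ((1 : H) ⊗ₜ[k] W), Algebra.TensorProduct.tmul_mul_tmul,
      mul_invOf_self, one_mul, ← Algebra.TensorProduct.one_def, one_mul, ← map_mul,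
      mul_invOf_self, map_one]

end IsTwoCocycle

namespace IsNormalized

variable {W : H ⊗[k] H}

theorem rTensor_counit_eq_one (hW : IsNormalized k H W) : ε₁ W = 1 :=
  (TensorProduct.lid k H).injective <| by
    rw [Algebra.TensorProduct.one_def, TensorProduct.lid_tmul, one_smul]; exact hW.1

theorem lTensor_counit_eq_one (hW : IsNormalized k H W) : ε₂ W = 1 :=
  (TensorProduct.rid k H).injective <| by
    rw [Algebra.TensorProduct.one_def, TensorProduct.rid_tmul, one_smul]; exact hW.2

end IsNormalized

variable (J L : H ⊗[k] H) [Invertible L]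

theorem twistedComul_apply (x : H) :
    twistedComul k H J L x = ⅟L * Coalgebra.comul (R := k) x * J := by
  simp [twistedComul, mul_assoc]

theorem rTensor_twistedComul (u : H ⊗[k] H) :
    (twistedComul k H J L).rTensor H u = (⅟L ⊗ₜ[k] (1 : H)) * Δ₁₂ u * (J ⊗ₜ[k] (1 : H)) := by
  induction u using TensorProduct.induction_on with
  | zero => simp
  | tmul a b => simp [Algebra.TensorProduct.tmul_mul_tmul, twistedComul_apply]
  | add x y hx hy => simp [map_add, hx, hy, mul_add, add_mul]

theorem lTensor_twistedComul (u : H ⊗[k] H) :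
    (twistedComul k H J L).lTensor H u = ((1 : H) ⊗ₜ[k] ⅟L) * Δ₂₃ u * ((1 : H) ⊗ₜ[k] J) := by
  induction u using TensorProduct.induction_on with
  | zero => simp
  | tmul a b => simp [Algebra.TensorProduct.tmul_mul_tmul, twistedComul_apply]
  | add x y hx hy => simp [map_add, hx, hy, mul_add, add_mul]

theorem twistedComul_coassoc (hJ : IsTwoCocycle k H J) (hL : IsTwoCocycle k H L) :
    (TensorProduct.assoc k H H H).toLinearMap ∘ₗ (twistedComul k H J L).rTensor H ∘ₗ
        twistedComul k H J L =
      (twistedComul k H J L).lTensor H ∘ₗ twistedComul k H J L := by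
  ext x
  have key :
      α (((⅟L ⊗ₜ[k] (1 : H)) * Δ₁₂ (⅟L)) * Δ₁₂ (Coalgebra.comul x) *
          (Δ₁₂ J * (J ⊗ₜ[k] (1 : H)))) =
        (((1 : H) ⊗ₜ[k] ⅟L) * Δ₂₃ (⅟L)) * Δ₂₃ (Coalgebra.comul x) *
          (Δ₂₃ J * ((1 : H) ⊗ₜ[k] J)) := by
    rw [map_mul, map_mul, hL.assoc_invOf_eq, hJ.assoc_eq]
    congr 2
    exact Coalgebra.coassoc_apply x
  simp only [LinearMap.comp_apply, LinearEquiv.coe_coe, rTensor_twistedComul,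
    lTensor_twistedComul, twistedComul_apply]
  change α _ = _
  simpa only [map_mul, mul_assoc] using key

theorem rTensor_counit_comp_twistedComul (hJ : IsNormalized k H J) (hL : IsNormalized k H L) :
    (Coalgebra.counit (R := k) (A := H)).rTensor H ∘ₗ twistedComul k H J L =
      TensorProduct.mk k k H 1 := by
  ext x
  change ε₁ (⅟L * Coalgebra.comul x * J) = 1 ⊗ₜ x
  rw [map_mul, map_mul, map_invOf_eq_one _ hL.rTensor_counit_eq_one, hJ.rTensor_counit_eq_one,
    one_mul, mul_one]
  exact Coalgebra.rTensor_counit_comul x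

theorem lTensor_counit_comp_twistedComul (hJ : IsNormalized k H J) (hL : IsNormalized k H L) :
    (Coalgebra.counit (R := k) (A := H)).lTensor H ∘ₗ twistedComul k H J L =
      (TensorProduct.mk k H k).flip 1 := by
  ext x
  change ε₂ (⅟L * Coalgebra.comul x * J) = x ⊗ₜ 1
  rw [map_mul, map_mul, map_invOf_eq_one _ hL.lTensor_counit_eq_one, hJ.lTensor_counit_eq_one,
    one_mul, mul_one]
  exact Coalgebra.lTensor_counit_comul x

end Twisted

theorem stmt14 (J L : H ⊗[k] H) [Invertible L]
    (hJ : IsTwoCocycle k H J) (hL : IsTwoCocycle k H L)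
    (hJn : IsNormalized k H J) (hLn : IsNormalized k H L) :
    (∀ f g h : Module.Dual k H,
      twistedDualMul k H J L (twistedDualMul k H J L f g) h =
        twistedDualMul k H J L f (twistedDualMul k H J L g h)) ∧
    (∀ f : Module.Dual k H,
      twistedDualMul k H J L (Coalgebra.counit (R := k) (A := H)) f = f ∧
      twistedDualMul k H J L f (Coalgebra.counit (R := k) (A := H)) = f) :=
  comulDualMul_assoc_and_unit _ _ (twistedComul_coassoc J L hJ hL)
    (rTensor_counit_comp_twistedComul J L hJn hLn) (lTensor_counit_comp_twistedComul J L hJn hLn)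
end
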